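/- Let u and v be Lyndon words over a totally ordered alphabet. Then u < v in the lexicographic order on finite words if and only if u^ω < v^ω in the lexicographic order on infinite words. -/
import Mathlib


variable {A : Type*} [LinearOrder A] [Inhabited A]

/-- The infinite periodic word `u^ω = uuu⋯`, as a function `ℕ → A`. -/
def omegaPow (u : List A) : ℕ → A := fun n => u.getD (n % u.length) default

/-- Lexicographic order on infinite words: `s < t` iff at the first position where
they differ, `s` has the smaller letter. -/
def lexLt (s t : ℕ → A) : Prop := ∃ k, (∀ i < k, s i = t i) ∧ s k < t k

/-- A nonempty word `w` is a Lyndon word: `w` is lexicographically smaller than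
each of its nonempty proper suffixes. -/
def IsLyndon (w : List A) : Prop :=
  w ≠ [] ∧ ∀ v, v <:+ w → v ≠ [] → v ≠ w → List.Lex (· < ·) w v

lemma lexLt_asymm {s t : ℕ → A} (h1 : lexLt s t) (h2 : lexLt t s) : False := by
  obtain ⟨k1, hk1, hlt1⟩ := h1
  obtain ⟨k2, hk2, hlt2⟩ := h2
  rcases lt_trichotomy k1 k2 with h | h | h
  · rw [hk2 k1 h] at hlt1; exact lt_irrefl _ hlt1
  · subst h; exact lt_asymm hlt1 hlt2
  · rw [hk1 k2 h] at hlt2; exact lt_irrefl _ hlt2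

lemma lex_struct {a b : List A} (h : List.Lex (· < ·) a b) :
    (∃ w, b = a ++ w ∧ w ≠ []) ∨
    ∃ j, j < a.length ∧ j < b.length ∧
      (∀ i < j, a.getD i default = b.getD i default) ∧
      a.getD j default < b.getD j default := by
  induction h with
  | nil => exact Or.inl ⟨_, rfl, by simp⟩
  | rel hab => exact Or.inr ⟨0, by simp, by simp,
      fun i hi => absurd hi (Nat.not_lt_zero i), by simpa using hab⟩
  | cons hlex ih =>
    rcases ih with ⟨w, hw, hwne⟩ | ⟨j, hj1, hj2, hagree, hlt⟩
    · exact Or.inl ⟨w, by simp [hw], hwne⟩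
    · refine Or.inr ⟨j + 1, by simp only [List.length_cons]; omega,
        by simp only [List.length_cons]; omega, ?_, ?_⟩
      · intro i hi
        cases i with
        | zero => simp
        | succ i' => simpa [List.getD_cons_succ] using hagree i' (by omega)
      · simpa [List.getD_cons_succ] using hlt

lemma lex_of_getD : ∀ (j : ℕ) (a b : List A), j < a.length → j < b.length →
    (∀ i < j, a.getD i default = b.getD i default) →
    a.getD j default < b.getD j default → List.Lex (· < ·) a b := by
  intro j
  induction j with
  | zero =>
    intro a b ha hb _ hlt
    cases a with
    | nil => simp at ha
    | cons x l1 =>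
      cases b with
      | nil => simp at hb
      | cons y l2 => exact List.Lex.rel (by simpa using hlt)
  | succ j ih =>
    intro a b ha hb hagree hlt
    cases a with
    | nil => simp at ha
    | cons x l1 =>
      cases b with
      | nil => simp at hb
      | cons y l2 =>
        have hxy : x = y := by simpa using hagree 0 (Nat.succ_pos _)
        subst hxy
        exact List.Lex.cons (ih l1 l2 (by simpa using ha) (by simpa using hb)
          (fun i hi => by simpa [List.getD_cons_succ] using hagree (i + 1) (by omega))
          (by simpa [List.getD_cons_succ] using hlt))

lemma lex_total : ∀ (a b : List A), List.Lex (· < ·) a b ∨ a = b ∨ List.Lex (· < ·) b a := by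
  intro a
  induction a with
  | nil =>
    intro b
    cases b with
    | nil => exact Or.inr (Or.inl rfl)
    | cons y m => exact Or.inl List.Lex.nil
  | cons x l ih =>
    intro b
    cases b with
    | nil => exact Or.inr (Or.inr List.Lex.nil)
    | cons y m =>
      rcases lt_trichotomy x y with h | h | h
      · exact Or.inl (List.Lex.rel h)
      · subst h
        rcases ih m with h | h | h
        · exact Or.inl (List.Lex.cons h)
        · exact Or.inr (Or.inl (by rw [h]))
        · exact Or.inr (Or.inr (List.Lex.cons h))
      · exact Or.inr (Or.inr (List.Lex.rel h))

/-- Key structural fact: if `v` is Lyndon and `t` is a nonempty proper suffix of `v`,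
then the lexicographic comparison `v < t` is decided within the length of `t`. -/
lemma lyndon_suffix_getD {v t : List A} (hv : IsLyndon v) (ht : t <:+ v) (htne : t ≠ [])
    (hlen : t.length < v.length) :
    ∃ j, j < t.length ∧ (∀ i < j, v.getD i default = t.getD i default) ∧
      v.getD j default < t.getD j default := by
  have hne : t ≠ v := fun h => by rw [h] at hlen; exact lt_irrefl _ hlen
  have hlex := hv.2 t ht htne hne
  rcases lex_struct hlex with ⟨w, hw, hwne⟩ | ⟨j, hj1, hj2, hagree, hlt⟩
  · exfalso
    rw [hw] at hlen
    simp only [List.length_append] at hlen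
    omega
  · exact ⟨j, hj2, hagree, hlt⟩

lemma omegaPow_of_lt {u : List A} {n : ℕ} (h : n < u.length) :
    omegaPow u n = u.getD n default := by
  simp [omegaPow, Nat.mod_eq_of_lt h]

/-- For a Lyndon word `v`, no shift of `v^ω` is lexicographically smaller than `v^ω`. -/
lemma not_shift_lexLt {v : List A} (hv : IsLyndon v) (m : ℕ) :
    ¬ lexLt (fun i => omegaPow v (m + i)) (omegaPow v) := by
  intro h
  have hvlen : 0 < v.length := List.length_pos_iff.mpr hv.1
  set m' := m % v.length with hm'
  have hshift : (fun i => omegaPow v (m + i)) = fun i => omegaPow v (m' + i) := by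
    funext i
    simp [omegaPow, hm', Nat.mod_add_mod]
  rw [hshift] at h
  rcases Nat.eq_zero_or_pos m' with h0 | hpos
  · obtain ⟨k, _, hk⟩ := h
    simp only [h0, Nat.zero_add] at hk
    exact lt_irrefl _ hk
  · have hm'lt : m' < v.length := Nat.mod_lt _ hvlen
    set t := v.drop m' with htdef
    have htlen : t.length = v.length - m' := by simp [htdef]
    have htpos : 0 < t.length := by omega
    have htne : t ≠ [] := List.length_pos_iff.mp htpos
    have htsuf : t <:+ v := List.drop_suffix _ _
    obtain ⟨j, hj, hagree, hlt⟩ := lyndon_suffix_getD hv htsuf htne (by omega)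
    have hgt : ∀ i : ℕ, t.getD i default = v.getD (m' + i) default := by
      intro i
      simp [htdef, List.getD_eq_getElem?_getD, List.getElem?_drop]
    have hforward : lexLt (omegaPow v) (fun i => omegaPow v (m' + i)) := by
      refine ⟨j, ?_, ?_⟩
      · intro i hi
        show omegaPow v i = omegaPow v (m' + i)
        rw [omegaPow_of_lt (show i < v.length by omega),
          omegaPow_of_lt (show m' + i < v.length by omega)]
        rw [hagree i hi, hgt i]
      · show omegaPow v j < omegaPow v (m' + j)
        rw [omegaPow_of_lt (show j < v.length by omega),
          omegaPow_of_lt (show m' + j < v.length by omega)]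
        rw [← hgt j]
        exact hlt
    exact lexLt_asymm hforward h

/-- Forward direction: if `u < v` lexicographically (both Lyndon), then `u^ω < v^ω`. -/
lemma omegaPow_lt_of_lex (u v : List A) (hu : IsLyndon u) (hv : IsLyndon v)
    (h : List.Lex (· < ·) u v) : lexLt (omegaPow u) (omegaPow v) := by
  classical
  have hul : 0 < u.length := List.length_pos_iff.mpr hu.1
  have hvl : 0 < v.length := List.length_pos_iff.mpr hv.1
  rcases lex_struct h with ⟨w, hw, hwne⟩ | ⟨j, hju, hjv, hagree, hlt⟩
  · -- u is a proper prefix of v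
    have hwl : 0 < w.length := List.length_pos_iff.mpr hwne
    have hvw : v.length = u.length + w.length := by rw [hw]; simp
    have hne : ∃ n, omegaPow u n ≠ omegaPow v n := by
      by_contra hc
      push_neg at hc
      obtain ⟨j, hj, _, hltj⟩ :=
        lyndon_suffix_getD hv (⟨u, hw.symm⟩ : w <:+ v) hwne (by omega)
      have h1 : w.getD j default = v.getD (u.length + j) default := by
        rw [hw]
        simp [List.getD_eq_getElem?_getD, List.getElem?_append_right,
          Nat.add_sub_cancel_left]
      have h2 : v.getD (u.length + j) default = omegaPow v (u.length + j) :=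
        (omegaPow_of_lt (by omega)).symm
      have h3 : omegaPow v (u.length + j) = omegaPow u (u.length + j) := (hc _).symm
      have h4 : omegaPow u (u.length + j) = omegaPow u j := by
        simp [omegaPow, Nat.add_mod_left]
      have h5 : omegaPow u j = omegaPow v j := hc j
      have h6 : omegaPow v j = v.getD j default := omegaPow_of_lt (by omega)
      rw [h1, h2, h3, h4, h5, h6] at hltj
      exact lt_irrefl _ hltj
    set k := Nat.find hne with hkdef
    have hk : omegaPow u k ≠ omegaPow v k := Nat.find_spec hne
    have hmin : ∀ i < k, omegaPow u i = omegaPow v i := fun i hi =>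
      not_not.mp (Nat.find_min hne hi)
    refine ⟨k, hmin, ?_⟩
    rcases lt_or_gt_of_ne hk with h' | h'
    · exact h'
    · exfalso
      set r := k % u.length with hr
      have hrk : r ≤ k := Nat.mod_le _ _
      have hrl : r < u.length := Nat.mod_lt _ hul
      have hkr : k - r = u.length * (k / u.length) := by
        have := Nat.div_add_mod k u.length
        omega
      refine not_shift_lexLt hv (k - r) ⟨r, ?_, ?_⟩
      · intro i hi
        show omegaPow v (k - r + i) = omegaPow v i
        have h1 : omegaPow v (k - r + i) = omegaPow u (k - r + i) :=
          (hmin _ (by omega)).symm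
        have h2 : omegaPow u (k - r + i) = omegaPow u i := by
          rw [hkr]
          simp [omegaPow, Nat.mul_add_mod]
        have h3 : omegaPow u i = u.getD i default := omegaPow_of_lt (by omega)
        have h4 : omegaPow v i = v.getD i default := omegaPow_of_lt (by omega)
        have h5 : v.getD i default = u.getD i default := by
          rw [hw]
          simp [List.getD_eq_getElem?_getD, List.getElem?_append,
            (show i < u.length by omega)]
        rw [h1, h2, h3, h4, h5]
      · show omegaPow v (k - r + r) < omegaPow v r
        rw [Nat.sub_add_cancel hrk]
        have h1 : omegaPow u k = u.getD r default := by
          show u.getD (k % u.length) default = u.getD r default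
          rw [← hr]
        have h2 : omegaPow v r = v.getD r default := omegaPow_of_lt (by omega)
        have h3 : v.getD r default = u.getD r default := by
          rw [hw]
          simp [List.getD_eq_getElem?_getD, List.getElem?_append, hrl]
        rw [h2, h3, ← h1]
        exact h'
  · -- u and v differ at a letter
    refine ⟨j, ?_, ?_⟩
    · intro i hi
      rw [omegaPow_of_lt (show i < u.length by omega),
        omegaPow_of_lt (show i < v.length by omega)]
      exact hagree i hi
    · rw [omegaPow_of_lt hju, omegaPow_of_lt hjv]
      exact hlt

/-- For Lyndon words `u, v`: `u < v` lexicographically iff `u^ω < v^ω`. -/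
theorem lyndon_lt_iff_omegaPow_lt (u v : List A) (hu : IsLyndon u) (hv : IsLyndon v) :
    List.Lex (· < ·) u v ↔ lexLt (omegaPow u) (omegaPow v) := by
  constructor
  · exact omegaPow_lt_of_lex u v hu hv
  · intro h
    rcases lex_total u v with h' | h' | h'
    · exact h'
    · exfalso
      subst h'
      obtain ⟨k, _, hk⟩ := h
      exact lt_irrefl _ hk
    · exact absurd (omegaPow_lt_of_lex v u hv hu h') (fun h2 => lexLt_asymm h h2)
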